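/- arXiv:2401.07423 — 4 statements merged into one kernel-verified Lean document; each statement's English description precedes it below -/
import Mathlib

section
/- Existence of equilibrium market tightness: under the stated assumptions, θ̄ > 0 and there exists θ ∈ (0, θ̄) with 𝒯(θ) = 0. -/
/-!
Write `A := y - z - β s τ - β (r + s) h / (1 - φ)`. At `θ = 0` the hiring cost is `c (r + s) / (1 - φ)`,
which the initial-vacancy condition puts strictly below `A`, so `𝒯 0 > 0`. The cut-off `θ̄` is chosen so
that the linear term `c φ θ̄ / (1 - φ)` of the cost alone equals `A + β ℓ`; the remaining terms at `θ̄`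
are then `-c (r + s) / ((1 - φ) q θ̄)`, `-β φ h θ̄ q θ̄ / (1 - φ)` and `-β ℓ (1 - θ̄ q θ̄)`, all
nonpositive and the first negative, so `𝒯 θ̄ < 0`. The intermediate value theorem gives the root.
-/

open Set

/-- `𝒯` with the constant part `y - z - β s τ - β (r + s) h / (1 - φ)` collected into `A`. -/
noncomputable def tightnessGap (A r s φ c h ℓ β : ℝ) (q : ℝ → ℝ) (x : ℝ) : ℝ :=
  A - (c / (1 - φ)) * ((r + s + φ * x * q x) / q x + (β * x * q x / c) * (φ * h - (1 - φ) * ℓ))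

section tightnessGap

variable {A r s φ c h ℓ β : ℝ} {q : ℝ → ℝ}

theorem tightnessGap_eq {x : ℝ} (hφ : φ ≠ 1) (hc : c ≠ 0) (hqx : q x ≠ 0) :
    tightnessGap A r s φ c h ℓ β q x =
      A - c * (r + s) / ((1 - φ) * q x) - c * φ * x / (1 - φ)
        - β * φ * h * (x * q x) / (1 - φ) + β * ℓ * (x * q x) := by
  have hφ' : 1 - φ ≠ 0 := sub_ne_zero.mpr hφ.symm
  unfold tightnessGap
  field_simp
  ring

theorem tightnessGap_zero (hq0 : q 0 = 1) :
    tightnessGap A r s φ c h ℓ β q 0 = A - c * (r + s) / (1 - φ) := by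
  simp [tightnessGap, hq0, mul_div_right_comm]

theorem tightnessGap_neg {x : ℝ} (hrs : 0 < r + s) (hφ : φ ∈ Ioo (0 : ℝ) 1) (hc : 0 < c)
    (hh : 0 ≤ h) (hℓ : 0 ≤ ℓ) (hβ : 0 ≤ β) (hqx : 0 < q x) (hx : 0 ≤ x) (hxq : x * q x ≤ 1)
    (hcut : c * φ * x = (1 - φ) * (A + β * ℓ)) :
    tightnessGap A r s φ c h ℓ β q x < 0 := by
  obtain ⟨hφ0, hφ1⟩ := hφ
  have hφ' : 0 < 1 - φ := sub_pos.mpr hφ1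
  have hlinear : c * φ * x / (1 - φ) = A + β * ℓ := by
    rw [div_eq_iff hφ'.ne', hcut, mul_comm]
  have hcost : 0 < c * (r + s) / ((1 - φ) * q x) := by positivity
  have hbargain : 0 ≤ β * φ * h * (x * q x) / (1 - φ) := by positivity
  have hdisagree : 0 ≤ β * ℓ * (1 - x * q x) := mul_nonneg (by positivity) (sub_nonneg.mpr hxq)
  rw [tightnessGap_eq hφ1.ne hc.ne' hqx.ne', hlinear]
  linarith

theorem continuousOn_tightnessGap {S : Set ℝ} (hq : ContinuousOn q S) (hq_ne : ∀ x ∈ S, q x ≠ 0) :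
    ContinuousOn (tightnessGap A r s φ c h ℓ β q) S := by
  unfold tightnessGap
  fun_prop (disch := assumption)

end tightnessGap

theorem lt_of_initial_vacancy {r s φ c h β Y : ℝ} (hrs : 0 < r + s) (hφ : φ < 1)
    (hvac : (1 - φ) * Y / (r + s) > c + β * h) :
    c * (r + s) / (1 - φ) < Y - β * (r + s) * h / (1 - φ) := by
  have hφ' : 0 < 1 - φ := sub_pos.mpr hφ
  rw [gt_iff_lt, lt_div_iff₀ hrs] at hvac
  rw [lt_sub_iff_add_lt, ← add_div, div_lt_iff₀ hφ']
  linarith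

/-- Existence of equilibrium market tightness: under the stated assumptions,
`θ̄ > 0` and there exists `θ ∈ (0, θ̄)` with `𝒯 θ = 0`. -/
theorem existence_of_equilibrium_tightness
    (r s φ c h ℓ y z τ β : ℝ) (q : ℝ → ℝ)
    (hr : 0 < r) (hs : s ∈ Set.Ioo (0 : ℝ) 1) (hφ : φ ∈ Set.Ioo (0 : ℝ) 1)
    (hc : 0 < c) (hh : 0 ≤ h) (hℓ : 0 ≤ ℓ)
    (hβ : β = 1 / (1 + r))
    (θbar : ℝ)
    (hθbar : θbar = ((1 - φ) / (c * φ)) *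
      (y - z - β * s * τ - β * (r + s) * h / (1 - φ) + β * ℓ))
    (T : ℝ → ℝ)
    (hT : ∀ x, T x = y - z - β * s * τ - β * (r + s) * h / (1 - φ) -
      (c / (1 - φ)) * ((r + s + φ * x * q x) / q x +
        (β * x * q x / c) * (φ * h - (1 - φ) * ℓ)))
    (hq_cont : ContinuousOn q (Set.Icc 0 θbar))
    (hq0 : q 0 = 1)
    (hq_pos : ∀ x ∈ Set.Icc 0 θbar, 0 < q x)
    (hxq : ∀ x ∈ Set.Ioc 0 θbar, 0 < x * q x ∧ x * q x < 1)
    (h_init_vac : (1 - φ) * (y - z - β * s * τ) / (r + s) > c + β * h) :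
    0 < θbar ∧ ∃ θ ∈ Set.Ioo 0 θbar, T θ = 0 := by
  set A := y - z - β * s * τ - β * (r + s) * h / (1 - φ)
  have hT_eq : T = tightnessGap A r s φ c h ℓ β q := funext hT
  have hrs : 0 < r + s := add_pos hr hs.1
  have hβ0 : 0 ≤ β := by rw [hβ]; positivity
  have hφ' : 0 < 1 - φ := sub_pos.mpr hφ.2
  have hA : c * (r + s) / (1 - φ) < A := lt_of_initial_vacancy hrs hφ.2 h_init_vac
  have hθbar_pos : 0 < θbar := by
    have hA_pos : 0 < A := lt_trans (by positivity) hA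
    have hφ0 : 0 < φ := hφ.1
    rw [hθbar]
    positivity
  have hcut : c * φ * θbar = (1 - φ) * (A + β * ℓ) := by
    rw [hθbar]
    field_simp [hc.ne', hφ.1.ne']
  have hθbar_mem : θbar ∈ Icc 0 θbar := right_mem_Icc.mpr hθbar_pos.le
  have h_at_zero : 0 < T 0 := by
    rw [hT_eq, tightnessGap_zero hq0]
    linarith
  have h_at_θbar : T θbar < 0 := by
    rw [hT_eq]
    exact tightnessGap_neg hrs hφ hc hh hℓ hβ0 (hq_pos θbar hθbar_mem) hθbar_pos.le
      (hxq θbar ⟨hθbar_pos, le_rfl⟩).2.le hcut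
  have hT_cont : ContinuousOn T (Icc 0 θbar) :=
    hT_eq ▸ continuousOn_tightnessGap hq_cont fun x hx => (hq_pos x hx).ne'
  exact ⟨hθbar_pos, intermediate_value_Ioo' hθbar_pos.le hT_cont ⟨h_at_θbar, h_at_zero⟩⟩
end

section
/- The value of 𝒯 at θ̄ satisfies 𝒯(θ̄) = −c·(r+s)/((1−φ)·q(θ̄)) − (β/(1−φ))·θ̄·q(θ̄)·φ·h − β·ℓ·(1 − θ̄·q(θ̄)), and in particular 𝒯(θ̄) < 0. -/
/-! Solving the definition of `θ̄` for the constant part of `𝒯` gives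
`y - z - β s τ - β (r+s) h / (1-φ) = c φ θ̄ / (1-φ) - β ℓ`. Substituted into `𝒯 θ̄`, the term
`c φ θ̄ / (1-φ)` cancels against the `φ θ̄ q(θ̄)` summand, which leaves the closed form; of its
three terms the first is negative and the other two are nonpositive. -/

lemma sub_eq_of_eq_div_mul_add {c φ x B b : ℝ} (hc : c ≠ 0) (hφ : φ ≠ 0) (hφ1 : 1 - φ ≠ 0)
    (hx : x = ((1 - φ) / (c * φ)) * (B + b)) :
    B = c * φ * x / (1 - φ) - b := by
  rw [hx]
  field_simp
  ring

lemma mul_div_sub_sub_eq_closed_form {r s φ c h ℓ β x Q : ℝ} (hc : c ≠ 0) (hφ1 : 1 - φ ≠ 0)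
    (hQ : Q ≠ 0) :
    c * φ * x / (1 - φ) - β * ℓ - (c / (1 - φ)) * ((r + s + φ * x * Q) / Q +
        (β * x * Q / c) * (φ * h - (1 - φ) * ℓ)) =
      -(c * (r + s) / ((1 - φ) * Q)) - (β / (1 - φ)) * x * Q * φ * h
        - β * ℓ * (1 - x * Q) := by
  field_simp
  ring

lemma closed_form_lt_zero {r s φ c h ℓ β x Q : ℝ} (hc : 0 < c) (hrs : 0 < r + s)
    (hφ : φ ∈ Set.Ioo (0 : ℝ) 1) (hh : 0 ≤ h) (hℓ : 0 ≤ ℓ) (hβ : 0 ≤ β) (hQ : 0 < Q)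
    (hxQ : 0 < x * Q) (hxQ_lt : x * Q < 1) :
    -(c * (r + s) / ((1 - φ) * Q)) - (β / (1 - φ)) * x * Q * φ * h
      - β * ℓ * (1 - x * Q) < 0 := by
  have h1φ : 0 < 1 - φ := sub_pos.mpr hφ.2
  have hterm₁_pos : 0 < c * (r + s) / ((1 - φ) * Q) := by positivity
  have hterm₂_nonneg : 0 ≤ (β / (1 - φ)) * x * Q * φ * h := by
    rw [mul_assoc (β / (1 - φ)) x Q]
    have := hφ.1
    positivity
  have hterm₃_nonneg : 0 ≤ β * ℓ * (1 - x * Q) := by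
    have : 0 ≤ 1 - x * Q := by linarith
    positivity
  linarith

/-- The value of `𝒯` at `θ̄` satisfies
`𝒯 θ̄ = −c·(r+s)/((1−φ)·q(θ̄)) − (β/(1−φ))·θ̄·q(θ̄)·φ·h − β·ℓ·(1 − θ̄·q(θ̄))`,
and in particular `𝒯 θ̄ < 0`. -/
theorem T_at_thetabar
    (r s φ c h ℓ y z τ β : ℝ) (q : ℝ → ℝ)
    (hr : 0 < r) (hs : s ∈ Set.Ioo (0 : ℝ) 1) (hφ : φ ∈ Set.Ioo (0 : ℝ) 1)
    (hc : 0 < c) (hh : 0 ≤ h) (hℓ : 0 ≤ ℓ)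
    (hβ : β = 1 / (1 + r))
    (θbar : ℝ)
    (hθbar : θbar = ((1 - φ) / (c * φ)) *
      (y - z - β * s * τ - β * (r + s) * h / (1 - φ) + β * ℓ))
    (T : ℝ → ℝ)
    (hT : ∀ x, T x = y - z - β * s * τ - β * (r + s) * h / (1 - φ) -
      (c / (1 - φ)) * ((r + s + φ * x * q x) / q x +
        (β * x * q x / c) * (φ * h - (1 - φ) * ℓ)))
    (hq_pos : 0 < q θbar)
    (hxq_pos : 0 < θbar * q θbar) (hxq_lt : θbar * q θbar < 1) :
    T θbar = -(c * (r + s) / ((1 - φ) * q θbar))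
        - (β / (1 - φ)) * θbar * q θbar * φ * h
        - β * ℓ * (1 - θbar * q θbar) ∧
    T θbar < 0 := by
  have h1φ : 1 - φ ≠ 0 := (sub_pos.mpr hφ.2).ne'
  have hconst := sub_eq_of_eq_div_mul_add hc.ne' hφ.1.ne' h1φ hθbar
  have hT_eq : T θbar = -(c * (r + s) / ((1 - φ) * q θbar))
      - (β / (1 - φ)) * θbar * q θbar * φ * h - β * ℓ * (1 - θbar * q θbar) := by
    rw [hT, hconst, mul_div_sub_sub_eq_closed_form hc.ne' h1φ hq_pos.ne']
  have hβ_nonneg : 0 ≤ β := by rw [hβ]; positivity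
  refine ⟨hT_eq, hT_eq ▸ closed_form_lt_zero hc (by linarith [hs.1]) hφ hh hℓ hβ_nonneg hq_pos
    hxq_pos hxq_lt⟩
end

section
/- Uniqueness of equilibrium market tightness: if q is differentiable on (0, θ̄) with q(x) > 0 and q′(x) < 0 for all x ∈ (0, θ̄), and if c·φ + β·(q(x) + x·q′(x))·(φ·h − (1−φ)·ℓ) > 0 for all x ∈ (0, θ̄), then 𝒯 is strictly decreasing on (0, θ̄); hence there is at most one θ ∈ (0, θ̄) with 𝒯(θ) = 0. -/
open Set

/- With `M = φ h − (1 − φ) ℓ`, the bracket in `𝒯 x` equals `(r + s) / q x + φ x + (β M / c) · x q(x)`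
wherever `q x ≠ 0`. Its derivative `−(r + s) q′/q² + (c φ + β (q + x q′) M) / c` is a sum of two
positive terms, so `𝒯 = C − (c / (1 − φ)) · bracket` is strictly decreasing, hence injective. -/

theorem strictMonoOn_Ioo_of_hasDerivAt_pos {u v : ℝ} {f f' : ℝ → ℝ}
    (hf : ∀ x ∈ Ioo u v, HasDerivAt f (f' x) x) (hf'_pos : ∀ x ∈ Ioo u v, 0 < f' x) :
    StrictMonoOn f (Ioo u v) :=
  strictMonoOn_of_hasDerivWithinAt_pos (convex_Ioo u v)
    (fun x hx => (hf x hx).continuousAt.continuousWithinAt)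
    (by simpa only [interior_Ioo] using fun x hx => (hf x hx).hasDerivWithinAt)
    (by simpa only [interior_Ioo] using hf'_pos)

noncomputable def tightnessCost (a φ b : ℝ) (q : ℝ → ℝ) (x : ℝ) : ℝ :=
  a / q x + φ * x + b * (x * q x)

theorem hasDerivAt_tightnessCost (a φ b : ℝ) {q : ℝ → ℝ} {q'x x : ℝ}
    (hq : HasDerivAt q q'x x) (hqx : q x ≠ 0) :
    HasDerivAt (tightnessCost a φ b q) (-(a * q'x) / q x ^ 2 + (φ + b * (q x + x * q'x))) x := by
  refine ((((hasDerivAt_const x a).div hq hqx).add ((hasDerivAt_id x).const_mul φ)).add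
    (((hasDerivAt_id x).mul hq).const_mul b)).congr_deriv ?_
  simp only [id]
  ring

theorem strictMonoOn_tightnessCost {a φ b u v : ℝ} {q q' : ℝ → ℝ} (ha : 0 < a)
    (hq : ∀ x ∈ Ioo u v, HasDerivAt q (q' x) x) (hq_pos : ∀ x ∈ Ioo u v, 0 < q x)
    (hq'_neg : ∀ x ∈ Ioo u v, q' x < 0)
    (h_slope : ∀ x ∈ Ioo u v, 0 < φ + b * (q x + x * q' x)) :
    StrictMonoOn (tightnessCost a φ b q) (Ioo u v) := by
  refine strictMonoOn_Ioo_of_hasDerivAt_pos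
    (fun x hx => hasDerivAt_tightnessCost a φ b (hq x hx) (hq_pos x hx).ne')
    fun x hx => add_pos ?_ (h_slope x hx)
  have hq_sq_pos : 0 < q x ^ 2 := pow_pos (hq_pos x hx) 2
  exact div_pos (by nlinarith [hq'_neg x hx]) hq_sq_pos

theorem uniqueness_of_equilibrium_tightness_general
    (r s φ c h ℓ y z τ β : ℝ) (q q' : ℝ → ℝ)
    (hr : 0 < r) (hs : s ∈ Set.Ioo (0 : ℝ) 1) (hφ : φ ∈ Set.Ioo (0 : ℝ) 1)
    (hc : 0 < c)
    (θbar : ℝ)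
    (T : ℝ → ℝ)
    (hT : ∀ x, T x = y - z - β * s * τ - β * (r + s) * h / (1 - φ) -
      (c / (1 - φ)) * ((r + s + φ * x * q x) / q x +
        (β * x * q x / c) * (φ * h - (1 - φ) * ℓ)))
    (hq_deriv : ∀ x ∈ Set.Ioo 0 θbar, HasDerivAt q (q' x) x)
    (hq_pos : ∀ x ∈ Set.Ioo 0 θbar, 0 < q x)
    (hq'_neg : ∀ x ∈ Set.Ioo 0 θbar, q' x < 0)
    (h_slope : ∀ x ∈ Set.Ioo 0 θbar,
      c * φ + β * (q x + x * q' x) * (φ * h - (1 - φ) * ℓ) > 0) :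
    StrictAntiOn T (Set.Ioo 0 θbar) ∧
    ∀ θ₁ ∈ Set.Ioo 0 θbar, ∀ θ₂ ∈ Set.Ioo 0 θbar, T θ₁ = 0 → T θ₂ = 0 → θ₁ = θ₂ := by
  set M := φ * h - (1 - φ) * ℓ
  set g := tightnessCost (r + s) φ (β * M / c) q
  have hT_eq : ∀ x ∈ Ioo 0 θbar,
      T x = y - z - β * s * τ - β * (r + s) * h / (1 - φ) - c / (1 - φ) * g x := by
    intro x hx
    rw [hT x]
    simp only [g, tightnessCost]
    field_simp [(hq_pos x hx).ne', hc.ne']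
  have hg : StrictMonoOn g (Ioo 0 θbar) :=
    strictMonoOn_tightnessCost (add_pos hr hs.1) hq_deriv hq_pos hq'_neg fun x hx => by
      have := div_pos (h_slope x hx) hc
      field_simp at this ⊢
      linarith
  have hK : 0 < c / (1 - φ) := div_pos hc (sub_pos.2 hφ.2)
  have hanti : StrictAntiOn T (Ioo 0 θbar) := fun a ha b hb hab => by
    rw [hT_eq a ha, hT_eq b hb]
    exact sub_lt_sub_left (mul_lt_mul_of_pos_left (hg ha hb hab) hK) _
  exact ⟨hanti, fun θ₁ h₁ θ₂ h₂ hT₁ hT₂ => hanti.injOn h₁ h₂ (hT₁.trans hT₂.symm)⟩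

/-- Uniqueness of equilibrium market tightness: if `q` is differentiable on `(0, θ̄)` with
`q x > 0` and `q′ x < 0` there, and if
`c·φ + β·(q x + x·q′ x)·(φ·h − (1−φ)·ℓ) > 0` on `(0, θ̄)`, then `𝒯` is strictly decreasing
on `(0, θ̄)`; hence there is at most one `θ ∈ (0, θ̄)` with `𝒯 θ = 0`. -/
theorem uniqueness_of_equilibrium_tightness
    (r s φ c h ℓ y z τ β : ℝ) (q q' : ℝ → ℝ)
    (hr : 0 < r) (hs : s ∈ Set.Ioo (0 : ℝ) 1) (hφ : φ ∈ Set.Ioo (0 : ℝ) 1)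
    (hc : 0 < c) (hh : 0 ≤ h) (hℓ : 0 ≤ ℓ)
    (hβ : β = 1 / (1 + r))
    (θbar : ℝ)
    (hθbar : θbar = ((1 - φ) / (c * φ)) *
      (y - z - β * s * τ - β * (r + s) * h / (1 - φ) + β * ℓ))
    (hθbar_pos : 0 < θbar)
    (T : ℝ → ℝ)
    (hT : ∀ x, T x = y - z - β * s * τ - β * (r + s) * h / (1 - φ) -
      (c / (1 - φ)) * ((r + s + φ * x * q x) / q x +
        (β * x * q x / c) * (φ * h - (1 - φ) * ℓ)))
    (hq_deriv : ∀ x ∈ Set.Ioo 0 θbar, HasDerivAt q (q' x) x)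
    (hq_pos : ∀ x ∈ Set.Ioo 0 θbar, 0 < q x)
    (hq'_neg : ∀ x ∈ Set.Ioo 0 θbar, q' x < 0)
    (h_slope : ∀ x ∈ Set.Ioo 0 θbar,
      c * φ + β * (q x + x * q' x) * (φ * h - (1 - φ) * ℓ) > 0) :
    StrictAntiOn T (Set.Ioo 0 θbar) ∧
    ∀ θ₁ ∈ Set.Ioo 0 θbar, ∀ θ₂ ∈ Set.Ioo 0 θbar, T θ₁ = 0 → T θ₂ = 0 → θ₁ = θ₂ :=
  uniqueness_of_equilibrium_tightness_general r s φ c h ℓ y z τ β q q' hr hs hφ hc θbar T hT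
    hq_deriv hq_pos hq'_neg h_slope
end

section
/- The workers' job-creation (Nash-bargained wage) condition: suppose J = y − w + β·(s·(0 − τ) + (1−s)·J), c = β·q₀·(J − h), E = w + β·(s·U + (1−s)·E), U = z + β·(f₀·(E − ℓ) + (1 − f₀)·U), f₀ = θ·q₀, and the Nash sharing rule (1−φ)·(E − U) = φ·J. Then w = z + φ·(y − z − β·s·τ + θ·c) + (f₀/(1+r))·(φ·h − (1−φ)·ℓ). -/
/-!
Solving the Bellman equations gives the firm's surplus `(1 - β(1-s)) J = y - w - βsτ` and
the worker's surplus `(1 - β(1-s) + βf₀)(E - U) = w - z + βf₀ℓ`, while free entry gives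
`βf₀ J = θc + βf₀h`. Multiplying the worker's surplus by `1 - φ` and substituting the sharing
rule `(1 - φ)(E - U) = φJ` leaves an equation that is linear in `w`, with coefficient
`(1 - φ) + φ = 1`.
-/

section NashWage

variable {β s φ θ q f y z w τ c h ℓ J E U : ℝ}

theorem firm_surplus_eq (hJ : J = y - w + β * (s * (0 - τ) + (1 - s) * J)) :
    (1 - β * (1 - s)) * J = y - w - β * s * τ := by
  linear_combination hJ

theorem worker_surplus_eq (hE : E = w + β * (s * U + (1 - s) * E))
    (hU : U = z + β * (f * (E - ℓ) + (1 - f) * U)) :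
    (1 - β * (1 - s) + β * f) * (E - U) = w - z + β * f * ℓ := by
  linear_combination hE - hU

theorem discounted_hiring_value_eq (hV : c = β * q * (J - h)) (hf : f = θ * q) :
    β * f * J = θ * c + β * f * h := by
  linear_combination -θ * hV + β * (J - h) * hf

theorem nash_wage_eq (hfirm : (1 - β * (1 - s)) * J = y - w - β * s * τ)
    (hworker : (1 - β * (1 - s) + β * f) * (E - U) = w - z + β * f * ℓ)
    (hNash : (1 - φ) * (E - U) = φ * J) (hhire : β * f * J = θ * c + β * f * h) :
    w = z + φ * (y - z - β * s * τ + θ * c) + β * f * (φ * h - (1 - φ) * ℓ) := by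
  linear_combination -(1 - φ) * hworker + (1 - β * (1 - s) + β * f) * hNash
    + φ * hfirm + φ * hhire

end NashWage

theorem workers_job_creation_condition_general
    (r s φ β θ q₀ f₀ y z w τ c h ℓ J E U : ℝ)
    (hβ : β = 1 / (1 + r))
    (hJ : J = y - w + β * (s * (0 - τ) + (1 - s) * J))
    (hV : c = β * q₀ * (J - h))
    (hE : E = w + β * (s * U + (1 - s) * E))
    (hU : U = z + β * (f₀ * (E - ℓ) + (1 - f₀) * U))
    (hf₀ : f₀ = θ * q₀)
    (hNash : (1 - φ) * (E - U) = φ * J) :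
    w = z + φ * (y - z - β * s * τ + θ * c) + (f₀ / (1 + r)) * (φ * h - (1 - φ) * ℓ) := by
  have hdiscount : f₀ / (1 + r) = β * f₀ := by
    rw [hβ, div_eq_mul_one_div, mul_comm]
  rw [hdiscount]
  exact nash_wage_eq (firm_surplus_eq hJ) (worker_surplus_eq hE hU) hNash
    (discounted_hiring_value_eq hV hf₀)

/-- The workers' job-creation (Nash-bargained wage) condition. -/
theorem workers_job_creation_condition
    (r s φ β θ q₀ f₀ y z w τ c h ℓ J E U : ℝ)
    (hr : 0 < r) (hs : s ∈ Set.Ioo (0 : ℝ) 1) (hφ : φ ∈ Set.Ioo (0 : ℝ) 1)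
    (hβ : β = 1 / (1 + r)) (hθ : 0 < θ) (hq₀ : 0 < q₀)
    (hJ : J = y - w + β * (s * (0 - τ) + (1 - s) * J))
    (hV : c = β * q₀ * (J - h))
    (hE : E = w + β * (s * U + (1 - s) * E))
    (hU : U = z + β * (f₀ * (E - ℓ) + (1 - f₀) * U))
    (hf₀ : f₀ = θ * q₀)
    (hNash : (1 - φ) * (E - U) = φ * J) :
    w = z + φ * (y - z - β * s * τ + θ * c) + (f₀ / (1 + r)) * (φ * h - (1 - φ) * ℓ) :=
  workers_job_creation_condition_general r s φ β θ q₀ f₀ y z w τ c h ℓ J E U hβ hJ hV hE hU hf₀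
    hNash
end
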